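/- The complete multipartite graph K_{n₁,…,n_p} (p ≥ 2) has a Hamilton cycle if and only if 2·max{n_i} ≤ n₁ + ⋯ + n_p (assuming n₁ + ⋯ + n_p ≥ 3). -/

import Mathlib

/-!
Necessity: a part is an independent set, so along a Hamiltonian cycle every vertex of it is
followed by a vertex outside it, and the part holds at most half of the vertices.

Sufficiency: list the `N` vertices part by part, a largest part first, as `v₀, …, v_{N-1}`, and
run through `v₀, v_h, v₁, v_{h+1}, …` with `h = ⌈N/2⌉`, then back to `v₀`. Apart from this
closing edge, consecutive vertices are `h` or `h - 1` places apart in the list while no part is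
longer than `N/2`, so they lie in different parts; putting a largest part first rules out the
one tight case, a part of size exactly `N/2` containing both `v_{j+1}` and `v_{h+j}`.
-/

lemma List.Nodup.countP_mem_eq_card {α : Type*} [Fintype α] [DecidableEq α] {l : List α}
    (hl : l.Nodup) (hmem : ∀ x, x ∈ l) (s : Finset α) : l.countP (· ∈ s) = s.card := by
  rw [List.countP_eq_length_filter, ← List.toFinset_card_of_nodup (hl.filter _),
    List.toFinset_filter]
  congr 1
  ext x
  simp [hmem]

lemma Fin.val_eq_succ_or_wrap_of_val_sub_eq_one {N : ℕ} {a b : Fin N} (h : (b - a).val = 1) :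
    b.val = a.val + 1 ∨ a.val + 1 = N ∧ b.val = 0 := by
  rcases le_or_gt a b with hab | hab
  · rw [Fin.coe_sub_iff_le.mpr hab] at h; omega
  · rw [Fin.coe_sub_iff_lt.mpr hab] at h; omega

namespace SimpleGraph

variable {V W : Type*} {G : SimpleGraph V} {H : SimpleGraph W}

lemma Walk.perm_dropLast_tail_support {a : V} (c : G.Walk a a) :
    c.support.dropLast.Perm c.support.tail := by
  refine (List.perm_cons a).mp ((List.perm_append_singleton a _).symm.trans ?_)
  rw [c.dropLast_support_concat, c.cons_tail_support]

variable [Fintype V] [DecidableEq V]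

lemma IsHamiltonian.two_mul_card_le_of_isIndepSet (hG : G.IsHamiltonian)
    (hV : Fintype.card V ≠ 1) {s : Finset V} (hs : G.IsIndepSet s) :
    2 * s.card ≤ Fintype.card V := by
  obtain ⟨a, c, hc⟩ := hG hV
  have hcount := (Walk.isHamiltonianCycle_iff_isCycle_and_support_count_tail_eq_one.mp hc).2
  have htail : c.support.tail.countP (· ∈ s) = s.card :=
    List.Nodup.countP_mem_eq_card (List.nodup_iff_count_le_one.mpr fun x ↦ (hcount x).le)
      (fun x ↦ List.count_pos_iff.mp (by rw [hcount x]; exact one_pos)) s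
  have hsnd : c.darts.countP (·.snd ∈ s) = s.card := by
    rw [← htail, ← Walk.map_snd_darts, List.countP_map]; rfl
  have hfst : c.darts.countP (·.fst ∈ s) = s.card := by
    rw [← htail, ← c.perm_dropLast_tail_support.countP_eq, ← Walk.map_fst_darts, List.countP_map]
    rfl
  calc 2 * s.card = c.darts.countP (·.fst ∈ s) + c.darts.countP (·.snd ∈ s) := by
        rw [hfst, hsnd, two_mul]
    _ ≤ c.darts.countP (·.fst ∈ s) + c.darts.countP (·.fst ∉ s) := by
        gcongr 1
        refine List.countP_mono_left fun d _ hd ↦ ?_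
        simp only [decide_eq_true_eq] at hd ⊢
        exact fun hfst ↦ hs hfst hd d.adj.ne d.adj
    _ = c.darts.length := by
        rw [List.length_eq_countP_add_countP (·.fst ∈ s)]
        simp only [decide_eq_true_eq]
    _ = Fintype.card V := by rw [c.length_darts, hc.length_eq]

variable [Fintype W] [DecidableEq W]

lemma IsHamiltonian.map (f : G →g H) (hf : Function.Bijective f) (hG : G.IsHamiltonian) :
    H.IsHamiltonian := fun hW ↦
  let ⟨a, c, hc⟩ := hG (by rwa [Fintype.card_of_bijective hf])
  ⟨f a, c.map f, hc.map hf⟩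

lemma cycleGraph_isHamiltonian {n : ℕ} (hn : 3 ≤ n) : (cycleGraph n).IsHamiltonian := by
  obtain ⟨k, rfl⟩ := Nat.exists_eq_add_of_le' hn
  exact fun _ ↦ ⟨0, cycleGraph.cycle k,
    Walk.isHamiltonianCycle_iff_isCycle_and_length_eq.mpr ⟨cycleGraph.isCycle_cycle, by simp⟩⟩

end SimpleGraph

def interleave (N k : ℕ) : ℕ :=
  if k % 2 = 0 then k / 2 else (N + 1) / 2 + k / 2

lemma interleave_lt {N k : ℕ} (hk : k < N) : interleave N k < N := by
  unfold interleave; split_ifs <;> omega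

lemma interleave_inj {N a b : ℕ} (ha : a < N) (hb : b < N)
    (h : interleave N a = interleave N b) : a = b := by
  unfold interleave at h; split_ifs at h <;> omega

lemma interleave_not_mem_Ico_of_succ {N S m a b : ℕ} (hm : 2 * m ≤ N) (hS : S = 0 ∨ m ≤ S)
    (hb : b < N) (hab : b = a + 1 ∨ a + 1 = N ∧ b = 0)
    (ha : interleave N a ∈ Set.Ico S (S + m)) : interleave N b ∉ Set.Ico S (S + m) := by
  simp only [Set.mem_Ico, interleave] at ha ⊢
  split_ifs at ha ⊢ <;> omega

def interleaveFin (N : ℕ) (k : Fin N) : Fin N := ⟨interleave N k, interleave_lt k.2⟩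

lemma interleaveFin_bijective (N : ℕ) : Function.Bijective (interleaveFin N) :=
  Finite.injective_iff_bijective.mp fun a b h ↦
    Fin.ext (interleave_inj a.2 b.2 (congrArg Fin.val h))

def partStart {p : ℕ} (m : Fin p → ℕ) (i : Fin p) : ℕ := ∑ j : Fin i, m (Fin.castLE i.2.le j)

lemma finSigmaFinEquiv_mem_Ico {p : ℕ} {m : Fin p → ℕ} (x : (i : Fin p) × Fin (m i)) :
    (finSigmaFinEquiv x : ℕ) ∈ Set.Ico (partStart m x.1) (partStart m x.1 + m x.1) := by
  simp [partStart]

lemma partStart_eq_zero_or_le {q : ℕ} (m : Fin (q + 1) → ℕ) (i : Fin (q + 1)) :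
    partStart m i = 0 ∨ m 0 ≤ partStart m i := by
  obtain ⟨_ | k, hk⟩ := i
  · simp [partStart]
  · right
    exact Finset.single_le_sum (f := fun j : Fin (k + 1) ↦ m (Fin.castLE hk.le j))
      (fun _ _ ↦ Nat.zero_le _) (Finset.mem_univ 0)

namespace SimpleGraph.completeMultipartiteGraph

def congrLeft {ι κ : Type*} {V : κ → Type*} (π : ι ≃ κ) :
    completeMultipartiteGraph (fun i ↦ V (π i)) ≃g completeMultipartiteGraph V where
  toEquiv := Equiv.sigmaCongrLeft π
  map_rel_iff' := by simp [Equiv.sigmaCongrLeft]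

lemma isIndepSet_range_sigmaMk {ι : Type*} {V : ι → Type*} (i : ι) :
    (completeMultipartiteGraph V).IsIndepSet (Set.range (Sigma.mk i)) := by
  rintro _ ⟨a, rfl⟩ _ ⟨b, rfl⟩ - hadj
  simp at hadj

lemma two_mul_card_le_of_isHamiltonian {ι : Type*} {V : ι → Type*} [Fintype ι] [DecidableEq ι]
    [∀ i, Fintype (V i)] [∀ i, DecidableEq (V i)]
    (hG : (completeMultipartiteGraph V).IsHamiltonian) (hV : Fintype.card (Σ i, V i) ≠ 1)
    (i : ι) : 2 * Fintype.card (V i) ≤ Fintype.card (Σ i, V i) := by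
  simpa using hG.two_mul_card_le_of_isIndepSet hV (s := Finset.univ.map (.sigmaMk i))
    (by simpa using isIndepSet_range_sigmaMk i)

lemma isHamiltonian_of_forall_le_zero {q : ℕ} (m : Fin (q + 1) → ℕ)
    (hmax : ∀ i, m i ≤ m 0) (hbal : 2 * m 0 ≤ ∑ i, m i) (h3 : 3 ≤ ∑ i, m i) :
    (completeMultipartiteGraph fun i ↦ Fin (m i)).IsHamiltonian := by
  set N := ∑ i, m i
  let σ := interleaveFin N
  refine (cycleGraph_isHamiltonian h3).map ⟨finSigmaFinEquiv.symm ∘ σ, ?_⟩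
    (finSigmaFinEquiv.symm.bijective.comp (interleaveFin_bijective N))
  have hsucc {a b : Fin N} (hab : (b - a).val = 1)
      (hsame : (finSigmaFinEquiv.symm (σ a)).1 = (finSigmaFinEquiv.symm (σ b)).1) : False := by
    have ha := finSigmaFinEquiv_mem_Ico (finSigmaFinEquiv.symm (σ a))
    have hb := finSigmaFinEquiv_mem_Ico (finSigmaFinEquiv.symm (σ b))
    rw [Equiv.apply_symm_apply] at ha hb
    rw [hsame] at ha
    set i := (finSigmaFinEquiv.symm (σ b)).1
    exact interleave_not_mem_Ico_of_succ (by linarith [hmax i])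
      ((partStart_eq_zero_or_le m i).imp_right (hmax i).trans) b.2
      (Fin.val_eq_succ_or_wrap_of_val_sub_eq_one hab) ha hb
  intro a b hab hsame
  rcases cycleGraph_adj'.mp hab with h | h
  · exact hsucc h hsame.symm
  · exact hsucc h hsame

end SimpleGraph.completeMultipartiteGraph

theorem stmt11_general (p : ℕ) (n : Fin p → ℕ) (hsum : 3 ≤ ∑ i, n i) :
    (SimpleGraph.completeMultipartiteGraph fun i => Fin (n i)).IsHamiltonian ↔
      ∀ i, 2 * n i ≤ ∑ j, n j := by
  constructor
  · intro h i
    simpa using SimpleGraph.completeMultipartiteGraph.two_mul_card_le_of_isHamiltonian h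
      (by simp; omega) i
  · intro hbal
    obtain ⟨q, rfl⟩ : ∃ q, p = q + 1 := Nat.exists_eq_add_one.mpr <| Nat.pos_of_ne_zero <| by
      rintro rfl; simp at hsum
    obtain ⟨c, -, hc⟩ := Finset.exists_max_image Finset.univ n Finset.univ_nonempty
    let π := Equiv.swap 0 c
    have hsum_π : ∑ i, n (π i) = ∑ i, n i := Equiv.sum_comp π n
    have hπ :=
      SimpleGraph.completeMultipartiteGraph.isHamiltonian_of_forall_le_zero (fun i ↦ n (π i))
        (by simpa [π] using fun i ↦ hc _ (Finset.mem_univ _))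
        (by simpa [π, hsum_π] using hbal c) (by simpa [hsum_π])
    let e := SimpleGraph.completeMultipartiteGraph.congrLeft (V := fun i ↦ Fin (n i)) π
    exact hπ.map e.toHom e.bijective

/-- the complete multipartite graph `K_{n₁,…,n_p}` (with `p ≥ 2`,
all parts nonempty and at least 3 vertices in total) has a Hamilton cycle iff
`2 max nᵢ ≤ n₁ + ⋯ + n_p`. -/
theorem stmt11 (p : ℕ) (hp : 2 ≤ p) (n : Fin p → ℕ) (hpos : ∀ i, 1 ≤ n i)
    (hsum : 3 ≤ ∑ i, n i) :
    (SimpleGraph.completeMultipartiteGraph fun i => Fin (n i)).IsHamiltonian ↔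
      ∀ i, 2 * n i ≤ ∑ j, n j :=
  stmt11_general p n hsum
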